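/- arXiv:1410.5206 — 3 statements merged into one kernel-verified Lean document; each statement's English description precedes it below -/
import Mathlib

section
/- Let W be an r-dimensional subspace of ℂ^N with r < N and let Φ = {φ_1, …, φ_s} be a family of unit norm vectors in W with s ≥ r. Then the frame potential satisfies FP(Φ) ≥ s²/r, with equality if and only if Φ is a subspace FUNTF for W, i.e., Φ spans W and Σ_{j=1}^s |⟨f, φ_j⟩|² = (s/r)‖f‖² for all f ∈ W. -/
open scoped InnerProductSpace ComplexConjugate

namespace FPaux

variable {r s : ℕ}

lemma normsq_re (z : ℂ) : (z * conj z).re = ‖z‖ ^ 2 := by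
  rw [Complex.mul_conj', ← Complex.ofReal_pow, Complex.ofReal_re]

lemma norm_sq_sum (g : EuclideanSpace ℂ (Fin r)) : ‖g‖ ^ 2 = ∑ i, ‖g i‖ ^ 2 := by
  rw [EuclideanSpace.norm_eq, Real.sq_sqrt]
  positivity

lemma sum3 {α γ δ M : Type*} [Fintype α] [Fintype γ] [Fintype δ] [AddCommMonoid M]
    (F : α → γ → δ → M) :
    (∑ a, ∑ c, ∑ d, F a c d) = ∑ c, ∑ d, ∑ a, F a c d := by
  rw [Finset.sum_comm]
  exact Finset.sum_congr rfl fun c _ => Finset.sum_comm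

lemma sum4 {α β γ δ M : Type*} [Fintype α] [Fintype β] [Fintype γ] [Fintype δ]
    [AddCommMonoid M] (F : α → β → γ → δ → M) :
    (∑ a, ∑ b, ∑ c, ∑ d, F a b c d) = ∑ c, ∑ d, ∑ a, ∑ b, F a b c d := by
  have h1 : ∀ a : α, (∑ b, ∑ c, ∑ d, F a b c d) = ∑ c, ∑ b, ∑ d, F a b c d :=
    fun a => Finset.sum_comm
  simp only [h1]
  rw [Finset.sum_comm]
  refine Finset.sum_congr rfl fun c _ => ?_
  have h2 : ∀ a : α, (∑ b, ∑ d, F a b c d) = ∑ d, ∑ b, F a b c d :=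
    fun a => Finset.sum_comm
  simp only [h2]
  rw [Finset.sum_comm]

/-- Gram expansion: FP equals the Frobenius norm squared of the r×r frame matrix. -/
lemma fp_eq (d : Fin s → EuclideanSpace ℂ (Fin r)) :
    ∑ j, ∑ k, ‖⟪d j, d k⟫_ℂ‖ ^ 2
      = ∑ i, ∑ i', ‖∑ j, conj (d j i) * d j i'‖ ^ 2 := by
  have e1 : ∀ j k : Fin s, ⟪d j, d k⟫_ℂ = ∑ i, conj (d j i) * d k i := by
    intro j k; simp [PiLp.inner_apply, RCLike.inner_apply, mul_comm]
  have main : (∑ j, ∑ k, (⟪d j, d k⟫_ℂ * conj (⟪d j, d k⟫_ℂ)))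
      = ∑ i, ∑ i', ((∑ j, conj (d j i) * d j i') * conj (∑ j, conj (d j i) * d j i')) := by
    have lhs : ∀ j k : Fin s, ⟪d j, d k⟫_ℂ * conj (⟪d j, d k⟫_ℂ)
        = ∑ i, ∑ i', (conj (d j i) * d k i) * (d j i' * conj (d k i')) := by
      intro j k
      rw [e1, map_sum, Finset.sum_mul_sum]
      simp [map_mul, mul_comm, mul_left_comm]
    have rhs : ∀ i i' : Fin r, (∑ j, conj (d j i) * d j i') * conj (∑ j, conj (d j i) * d j i')
        = ∑ j, ∑ k, (conj (d j i) * d k i) * (d j i' * conj (d k i')) := by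
      intro i i'
      rw [map_sum, Finset.sum_mul_sum]
      refine Finset.sum_congr rfl fun j _ => Finset.sum_congr rfl fun k _ => ?_
      simp only [map_mul, RingHomCompTriple.comp_apply, Complex.conj_conj, RingHom.id_apply]
      try ring
    simp only [lhs, rhs]
    exact sum4 _
  have := congrArg Complex.re main
  simpa only [Complex.re_sum, normsq_re] using this

/-- quadratic form expansion -/
lemma qf_eq (d : Fin s → EuclideanSpace ℂ (Fin r)) (g : EuclideanSpace ℂ (Fin r)) :
    ∑ j, ‖⟪d j, g⟫_ℂ‖ ^ 2
      = (∑ i, ∑ i', g i * conj (g i') * (∑ j, conj (d j i) * d j i')).re := by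
  have e1 : ∀ j : Fin s, ⟪d j, g⟫_ℂ = ∑ i, conj (d j i) * g i := by
    intro j; simp [PiLp.inner_apply, RCLike.inner_apply, mul_comm]
  have main : (∑ j, (⟪d j, g⟫_ℂ * conj (⟪d j, g⟫_ℂ)))
      = ∑ i, ∑ i', g i * conj (g i') * (∑ j, conj (d j i) * d j i') := by
    have lhs : ∀ j : Fin s, ⟪d j, g⟫_ℂ * conj (⟪d j, g⟫_ℂ)
        = ∑ i, ∑ i', (conj (d j i) * g i) * (d j i' * conj (g i')) := by
      intro j
      rw [e1, map_sum, Finset.sum_mul_sum]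
      refine Finset.sum_congr rfl fun i _ => Finset.sum_congr rfl fun i' _ => ?_
      simp only [map_mul, RingHomCompTriple.comp_apply, Complex.conj_conj, RingHom.id_apply]
      try ring
    have rhs : ∀ i i' : Fin r, g i * conj (g i') * (∑ j, conj (d j i) * d j i')
        = ∑ j, (conj (d j i) * g i) * (d j i' * conj (g i')) := by
      intro i i'
      rw [Finset.mul_sum]
      refine Finset.sum_congr rfl fun j _ => ?_
      ring
    simp only [lhs, rhs]
    exact sum3 _
  have := congrArg Complex.re main
  rw [← this]
  simp only [Complex.re_sum, normsq_re]

/-- diagonal entries -/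
lemma diag_eq (d : Fin s → EuclideanSpace ℂ (Fin r)) (i : Fin r) :
    (∑ j, conj (d j i) * d j i) = ((∑ j, ‖d j i‖ ^ 2 : ℝ) : ℂ) := by
  have : ∀ j : Fin s, conj (d j i) * d j i = ((‖d j i‖ ^ 2 : ℝ) : ℂ) := by
    intro j
    rw [mul_comm, Complex.mul_conj']
    push_cast; ring
  rw [Finset.sum_congr rfl fun j _ => this j]
  exact (Complex.ofReal_sum _ _).symm

lemma trace_eq (d : Fin s → EuclideanSpace ℂ (Fin r)) (hd : ∀ j, ‖d j‖ = 1) :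
    ∑ i, (∑ j, ‖d j i‖ ^ 2) = (s : ℝ) := by
  rw [Finset.sum_comm]
  have h1 : ∀ j : Fin s, (∑ i, ‖d j i‖ ^ 2) = 1 := by
    intro j; rw [← norm_sq_sum, hd j, one_pow]
  rw [Finset.sum_congr rfl fun j _ => h1 j]
  simp


lemma core (r s : ℕ) (hr : 0 < r) (d : Fin s → EuclideanSpace ℂ (Fin r))
    (hd : ∀ j, ‖d j‖ = 1) :
    (s : ℝ) ^ 2 / r ≤ (∑ j, ∑ k, ‖⟪d j, d k⟫_ℂ‖ ^ 2) ∧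
      ((∑ j, ∑ k, ‖⟪d j, d k⟫_ℂ‖ ^ 2) = (s : ℝ) ^ 2 / r →
        ∀ g : EuclideanSpace ℂ (Fin r), ∑ j, ‖⟪d j, g⟫_ℂ‖ ^ 2 = ((s : ℝ) / r) * ‖g‖ ^ 2) := by
  have hrne : (r : ℝ) ≠ 0 := Nat.cast_ne_zero.mpr hr.ne'
  set M : Fin r → Fin r → ℂ := fun i i' => ∑ j, conj (d j i) * d j i' with hM
  set x : Fin r → ℝ := fun i => ∑ j, ‖d j i‖ ^ 2 with hx
  set c : ℝ := (s : ℝ) / r with hc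
  have hdiag : ∀ i, M i i = ((x i : ℝ) : ℂ) := fun i => diag_eq d i
  have htr : ∑ i, x i = (s : ℝ) := trace_eq d hd
  have hfp : (∑ j, ∑ k, ‖⟪d j, d k⟫_ℂ‖ ^ 2) = ∑ i, ∑ i', ‖M i i'‖ ^ 2 := fp_eq d
  have hdiagnorm : ∀ i, ‖M i i‖ ^ 2 = x i ^ 2 := by
    intro i
    rw [hdiag i, Complex.norm_real, Real.norm_eq_abs, sq_abs]
  set E : ℝ := ∑ i, ∑ i' ∈ Finset.univ.erase i, ‖M i i'‖ ^ 2 with hE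
  set D : ℝ := ∑ i, (x i - c) ^ 2 with hD
  have hEnonneg : 0 ≤ E := by positivity
  have hDnonneg : 0 ≤ D := by positivity
  have hsplit : (∑ i, ∑ i', ‖M i i'‖ ^ 2) = E + ∑ i, x i ^ 2 := by
    rw [hE, ← Finset.sum_add_distrib]
    refine Finset.sum_congr rfl fun i _ => ?_
    rw [← hdiagnorm i]
    exact (Finset.sum_erase_add _ _ (Finset.mem_univ i)).symm
  have hDeq : ∑ i, x i ^ 2 = (s : ℝ) ^ 2 / r + D := by
    have expand : ∀ i : Fin r, (x i - c) ^ 2 = x i ^ 2 - 2 * c * x i + c ^ 2 := fun i => by ring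
    have h1 : D = (∑ i, x i ^ 2) - 2 * c * (s : ℝ) + (r : ℝ) * c ^ 2 := by
      rw [hD, Finset.sum_congr rfl fun i _ => expand i, Finset.sum_add_distrib,
        Finset.sum_sub_distrib, ← Finset.mul_sum, htr, Finset.sum_const, Finset.card_univ,
        Fintype.card_fin, nsmul_eq_mul]
    rw [h1, hc]
    field_simp
    ring
  have hfull : (∑ j, ∑ k, ‖⟪d j, d k⟫_ℂ‖ ^ 2) = (s : ℝ) ^ 2 / r + D + E := by
    rw [hfp, hsplit, hDeq]; ring
  constructor
  · rw [hfull]; linarith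
  · intro heq
    have hDE : D + E = 0 := by rw [hfull] at heq; linarith
    have hD0 : D = 0 := by linarith
    have hE0 : E = 0 := by linarith
    have hxall : ∀ i : Fin r, x i = c := by
      intro i
      have := (Finset.sum_eq_zero_iff_of_nonneg
        (fun i _ => sq_nonneg (x i - c))).mp hD0 i (Finset.mem_univ i)
      have h2 : x i - c = 0 := by
        exact pow_eq_zero_iff (two_ne_zero) |>.mp this
      linarith
    have hoff : ∀ i i' : Fin r, i' ≠ i → M i i' = 0 := by
      intro i i' hne
      have h1 := (Finset.sum_eq_zero_iff_of_nonneg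
        (fun i _ => Finset.sum_nonneg fun i' _ => sq_nonneg ‖M i i'‖)).mp hE0 i (Finset.mem_univ i)
      have h2 := (Finset.sum_eq_zero_iff_of_nonneg
        (fun i' _ => sq_nonneg ‖M i i'‖)).mp h1 i' (Finset.mem_erase.mpr ⟨hne, Finset.mem_univ i'⟩)
      have h3 : ‖M i i'‖ = 0 := pow_eq_zero_iff (two_ne_zero) |>.mp h2
      exact norm_eq_zero.mp h3
    intro g
    rw [qf_eq d g]
    have hinner : ∀ i : Fin r, (∑ i', g i * conj (g i') * M i i') = ((c * ‖g i‖ ^ 2 : ℝ) : ℂ) := by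
      intro i
      rw [Finset.sum_eq_single i]
      · have hgg : g i * conj (g i) = ((‖g i‖ ^ 2 : ℝ) : ℂ) := by
          rw [Complex.mul_conj']; push_cast; ring
        rw [hdiag i, hxall i, hgg]
        push_cast
        ring
      · intro i' _ hne
        rw [hoff i i' hne, mul_zero]
      · intro h; exact absurd (Finset.mem_univ i) h
    rw [Finset.sum_congr rfl fun i _ => hinner i, ← Complex.ofReal_sum, Complex.ofReal_re,
      ← Finset.mul_sum, ← norm_sq_sum]

end FPaux

lemma FPaux.transfer {E : Type*} [NormedAddCommGroup E] [InnerProductSpace ℂ E]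
    (W : Submodule ℂ E) [FiniteDimensional ℂ W] (r : ℕ) (hWdim : Module.finrank ℂ W = r)
    (s : ℕ) (φ : Fin s → E) (hφmem : ∀ j, φ j ∈ W) :
    ∃ d : Fin s → EuclideanSpace ℂ (Fin r),
      (∀ j k, ⟪d j, d k⟫_ℂ = ⟪φ j, φ k⟫_ℂ) ∧ (∀ j, ‖d j‖ = ‖φ j‖) ∧
      (∀ f, f ∈ W → ∃ g : EuclideanSpace ℂ (Fin r),
        (∀ j, ⟪φ j, f⟫_ℂ = ⟪d j, g⟫_ℂ) ∧ ‖f‖ = ‖g‖) := by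
  have b := (stdOrthonormalBasis ℂ W).reindex (finCongr hWdim)
  refine ⟨fun j => b.repr ⟨φ j, hφmem j⟩, fun j k => ?_, fun j => ?_, fun f hf => ?_⟩
  · rw [LinearIsometryEquiv.inner_map_map, Submodule.coe_inner]
  · rw [LinearIsometryEquiv.norm_map]
    rfl
  · refine ⟨b.repr ⟨f, hf⟩, fun j => ?_, ?_⟩
    · rw [LinearIsometryEquiv.inner_map_map, Submodule.coe_inner]
    · rw [LinearIsometryEquiv.norm_map]
      rfl

/-- **Theorem 4 (part 3).** If `Φ = {φ_1, …, φ_s}` is a family of unit vectors in an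
`r`-dimensional subspace `W` of `ℂ^N` (`r < N`) with `s ≥ r`, then the frame potential
satisfies `FP(Φ) ≥ s²/r`, with equality if and only if `Φ` is a subspace FUNTF for `W`,
i.e., `Φ` spans `W` and `Σ_j |⟨f, φ_j⟩|² = (s/r)‖f‖²` for all `f ∈ W`. -/
theorem subspace_frame_potential_ge_dim
    (N r s : ℕ) (hr : r < N)
    (W : Submodule ℂ (EuclideanSpace ℂ (Fin N)))
    (hWdim : Module.finrank ℂ W = r)
    (φ : Fin s → EuclideanSpace ℂ (Fin N))
    (hφmem : ∀ j, φ j ∈ W)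
    (hφnorm : ∀ j, ‖φ j‖ = 1)
    (hs : r ≤ s) :
    (s : ℝ) ^ 2 / r ≤ ∑ j, ∑ k, ‖⟪φ j, φ k⟫_ℂ‖ ^ 2 ∧
      ((∑ j, ∑ k, ‖⟪φ j, φ k⟫_ℂ‖ ^ 2) = (s : ℝ) ^ 2 / r ↔
        (Submodule.span ℂ (Set.range φ) = W ∧
          ∀ f ∈ W, ∑ j, ‖⟪φ j, f⟫_ℂ‖ ^ 2 = ((s : ℝ) / r) * ‖f‖ ^ 2)) := by
  rcases Nat.eq_zero_or_pos r with hr0 | hrpos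
  · -- degenerate case r = 0
    subst hr0
    have hW : W = ⊥ := Submodule.finrank_eq_zero.mp hWdim
    have hs0 : s = 0 := by
      by_contra h
      have hpos : 0 < s := Nat.pos_of_ne_zero h
      have h1 : φ ⟨0, hpos⟩ ∈ W := hφmem _
      rw [hW, Submodule.mem_bot] at h1
      have h2 := hφnorm ⟨0, hpos⟩
      rw [h1, norm_zero] at h2
      exact one_ne_zero h2.symm
    subst hs0
    have hrange : Set.range φ = ∅ := Set.range_eq_empty φ
    refine ⟨by simp, ?_, ?_⟩
    · intro _
      refine ⟨by rw [hrange, Submodule.span_empty, hW], ?_⟩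
      intro f hf
      rw [hW, Submodule.mem_bot] at hf
      subst hf
      simp
    · intro _
      simp
  · -- main case r ≥ 1
    have hrne : (r : ℝ) ≠ 0 := Nat.cast_ne_zero.mpr hrpos.ne'
    obtain ⟨d, hinner, hdnorm', htransf⟩ := FPaux.transfer W r hWdim s φ hφmem
    have hdnorm : ∀ j, ‖d j‖ = 1 := fun j => (hdnorm' j).trans (hφnorm j)
    obtain ⟨hle, hcore⟩ := FPaux.core r s hrpos d hdnorm
    have hfp_transfer : (∑ j, ∑ k, ‖⟪φ j, φ k⟫_ℂ‖ ^ 2)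
        = ∑ j, ∑ k, ‖⟪d j, d k⟫_ℂ‖ ^ 2 := by
      simp only [hinner]
    refine ⟨by rw [hfp_transfer]; exact hle, ?_, ?_⟩
    · -- equality → FUNTF
      intro heqFP
      have htightE := hcore (by rw [← hfp_transfer]; exact heqFP)
      have htight : ∀ f ∈ W, ∑ j, ‖⟪φ j, f⟫_ℂ‖ ^ 2 = ((s : ℝ) / r) * ‖f‖ ^ 2 := by
        intro f hf
        obtain ⟨g, hg1, hg2⟩ := htransf f hf
        rw [Finset.sum_congr rfl fun j _ => by rw [hg1 j], hg2]
        exact htightE g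
      refine ⟨?_, htight⟩
      -- span
      have hsub : Submodule.span ℂ (Set.range φ) ≤ W :=
        Submodule.span_le.mpr (by rintro _ ⟨j, rfl⟩; exact hφmem j)
      refine le_antisymm hsub ?_
      intro f hf
      set V := Submodule.span ℂ (Set.range φ) with hV
      haveI : FiniteDimensional ℂ V := FiniteDimensional.span_of_finite ℂ (Set.finite_range φ)
      set p : EuclideanSpace ℂ (Fin N) := (V.orthogonalProjectionOnto f : EuclideanSpace ℂ (Fin N))
        with hp
      have hpV : p ∈ V := SetLike.coe_mem _
      have hqW : f - p ∈ W := W.sub_mem hf (hsub hpV)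
      have horth : ∀ j, ⟪φ j, f - p⟫_ℂ = 0 := by
        intro j
        exact (Submodule.mem_orthogonal V _).mp
          (V.sub_starProjection_mem_orthogonal f) (φ j)
          (Submodule.subset_span ⟨j, rfl⟩)
      have hzero := htight (f - p) hqW
      rw [Finset.sum_congr rfl fun j _ => by rw [horth j]] at hzero
      simp only [norm_zero] at hzero
      have h0 : (0 : ℝ) = ((s : ℝ) / r) * ‖f - p‖ ^ 2 := by simpa using hzero
      have hsr : (0 : ℝ) < (s : ℝ) / r := by
        apply div_pos
        · exact_mod_cast Nat.lt_of_lt_of_le hrpos hs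
        · exact_mod_cast hrpos
      have hnorm0 : ‖f - p‖ ^ 2 = 0 := by
        by_contra hne
        have : 0 < ‖f - p‖ ^ 2 := lt_of_le_of_ne (sq_nonneg _) (Ne.symm hne)
        nlinarith
      have hfp0 : f - p = 0 := by
        rw [← norm_eq_zero]
        exact pow_eq_zero_iff two_ne_zero |>.mp hnorm0
      have hfp' : f = p := by rwa [sub_eq_zero] at hfp0
      rw [hfp']
      exact hpV
    · -- FUNTF → equality
      rintro ⟨-, htight⟩
      rw [Finset.sum_comm]
      have hk : ∀ k : Fin s, (∑ j, ‖⟪φ j, φ k⟫_ℂ‖ ^ 2) = (s : ℝ) / r := by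
        intro k
        rw [htight (φ k) (hφmem k), hφnorm k]
        ring
      rw [Finset.sum_congr rfl fun k _ => hk k, Finset.sum_const, Finset.card_univ,
        Fintype.card_fin, nsmul_eq_mul]
      field_simp
end

section
/- Let Φ = {φ_1, …, φ_s} ⊂ ℂ^N be a family of unit norm vectors with s ≥ N. Then the frame potential satisfies FP(Φ) ≥ s²/N, with equality if and only if Φ is a FUNTF for ℂ^N, i.e., Σ_{j=1}^s |⟨f, φ_j⟩|² = (s/N)‖f‖² for all f ∈ ℂ^N. -/
open scoped InnerProductSpace ComplexConjugate
open Finset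

lemma cnormsq (z : ℂ) : (‖z‖^2 : ℂ) = conj z * z := by
  rw [← Complex.normSq_eq_conj_mul_self]
  norm_cast
  exact Complex.sq_norm z

lemma aux1 (N s : ℕ) (φ : Fin s → EuclideanSpace ℂ (Fin N)) (f : EuclideanSpace ℂ (Fin N)) :
    ((∑ j, ‖⟪φ j, f⟫_ℂ‖^2 : ℝ) : ℂ)
      = ∑ i, ∑ k, conj (f i) * f k * (∑ j, φ j i * conj (φ j k)) := by
  push_cast
  calc (∑ j, (‖⟪φ j, f⟫_ℂ‖^2 : ℂ))
      = ∑ j, conj ⟪φ j, f⟫_ℂ * ⟪φ j, f⟫_ℂ := by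
        exact Finset.sum_congr rfl fun j _ => cnormsq _
    _ = ∑ j, (∑ i, φ j i * conj (f i)) * (∑ k, conj (φ j k) * f k) := by
        simp [PiLp.inner_apply, RCLike.inner_apply, map_sum, mul_comm]
    _ = ∑ j, ∑ i, ∑ k, conj (f i) * f k * (φ j i * conj (φ j k)) := by
        refine Finset.sum_congr rfl fun j _ => ?_
        rw [Finset.sum_mul_sum]
        exact Finset.sum_congr rfl fun i _ => Finset.sum_congr rfl fun k _ => by ring
    _ = ∑ i, ∑ k, conj (f i) * f k * (∑ j, φ j i * conj (φ j k)) := by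
        rw [Finset.sum_comm]
        refine Finset.sum_congr rfl fun i _ => ?_
        rw [Finset.sum_comm]
        simp [Finset.mul_sum]

/-- **Theorem 3 (part 3, Benedetto–Fickus).** If `Φ = {φ_1, …, φ_s} ⊂ ℂ^N` is a family of
unit vectors with `s ≥ N`, then the frame potential satisfies `FP(Φ) ≥ s²/N`, with
equality if and only if `Φ` is a FUNTF for `ℂ^N`, i.e.,
`Σ_j |⟨f, φ_j⟩|² = (s/N)‖f‖²` for all `f ∈ ℂ^N`. -/
theorem frame_potential_ge_dim
    (N s : ℕ)
    (φ : Fin s → EuclideanSpace ℂ (Fin N))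
    (hφnorm : ∀ j, ‖φ j‖ = 1)
    (hs : N ≤ s) :
    (s : ℝ) ^ 2 / N ≤ ∑ j, ∑ k, ‖⟪φ j, φ k⟫_ℂ‖ ^ 2 ∧
      ((∑ j, ∑ k, ‖⟪φ j, φ k⟫_ℂ‖ ^ 2) = (s : ℝ) ^ 2 / N ↔
        ∀ f : EuclideanSpace ℂ (Fin N),
          ∑ j, ‖⟪φ j, f⟫_ℂ‖ ^ 2 = ((s : ℝ) / N) * ‖f‖ ^ 2) := by
  rcases Nat.eq_zero_or_pos N with hN0 | hN
  · -- N = 0 forces s = 0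
    subst hN0
    have hs0 : s = 0 := by
      by_contra h
      have h1 := hφnorm ⟨0, Nat.pos_of_ne_zero h⟩
      have h2 : φ ⟨0, Nat.pos_of_ne_zero h⟩ = 0 := Subsingleton.elim _ _
      rw [h2] at h1
      simp at h1
    subst hs0
    simp
  have hspos : 0 < s := lt_of_lt_of_le hN hs
  set FP : ℝ := ∑ j, ∑ k, ‖⟪φ j, φ k⟫_ℂ‖ ^ 2 with hFP
  set v : EuclideanSpace ℂ (Fin N × Fin N) :=
    WithLp.toLp 2 (fun p => ∑ j, φ j p.1 * conj (φ j p.2) : (Fin N × Fin N) → ℂ) with hv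
  set w : EuclideanSpace ℂ (Fin N × Fin N) :=
    WithLp.toLp 2 (fun p => if p.1 = p.2 then 1 else 0 : (Fin N × Fin N) → ℂ) with hw
  have hφself : ∀ j, ⟪φ j, φ j⟫_ℂ = 1 := by
    intro j
    rw [inner_self_eq_norm_sq_to_K, hφnorm j]
    norm_num
  -- ⟪w, v⟫ = s
  have hwv : ⟪w, v⟫_ℂ = (s : ℂ) := by
    rw [PiLp.inner_apply]
    simp only [RCLike.inner_apply, hw, hv, PiLp.toLp_apply]
    rw [Fintype.sum_prod_type]
    simp only [apply_ite (starRingEnd ℂ), map_one, map_zero, ite_mul, one_mul, zero_mul, mul_ite, mul_one, mul_zero]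
    rw [Finset.sum_comm]
    calc ∑ k : Fin N, ∑ i : Fin N, (if i = k then ∑ j, φ j i * conj (φ j k) else 0)
        = ∑ k : Fin N, ∑ j, φ j k * conj (φ j k) := by
          refine Finset.sum_congr rfl fun k _ => ?_
          rw [Finset.sum_ite_eq' Finset.univ k (fun i => ∑ j, φ j i * conj (φ j k))]
          simp
      _ = ∑ j, ⟪φ j, φ j⟫_ℂ := by
          rw [Finset.sum_comm]
          refine Finset.sum_congr rfl fun j _ => ?_
          rw [PiLp.inner_apply]
          simp only [RCLike.inner_apply, mul_comm]
      _ = (s : ℂ) := by simp [hφself, hφnorm]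
  -- ⟪w, w⟫ = N,  ‖w‖² = N
  have hww : ⟪w, w⟫_ℂ = (N : ℂ) := by
    rw [PiLp.inner_apply]
    simp only [RCLike.inner_apply, hw, PiLp.toLp_apply]
    rw [Fintype.sum_prod_type]
    simp [Finset.sum_ite_eq']
  have hwn : ‖w‖ ^ 2 = (N : ℝ) := by
    have := inner_self_eq_norm_sq (𝕜 := ℂ) w
    rw [hww] at this
    simpa using this.symm
  -- ⟪v, v⟫ = FP (complexified)
  have hvconj : ∀ i k : Fin N, conj (v (i, k)) = ∑ j, conj (φ j i) * φ j k := by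
    intro i k
    simp [hv, map_sum]
  have hvv : ⟪v, v⟫_ℂ = (FP : ℂ) := by
    rw [PiLp.inner_apply, Fintype.sum_prod_type]
    have : ∀ i k : Fin N, ⟪v (i, k), v (i, k)⟫_ℂ
        = ∑ j, conj (φ j i) * φ j k * v (i, k) := by
      intro i k
      rw [RCLike.inner_apply, hvconj, mul_comm, Finset.sum_mul]
    simp only [this]
    rw [show (FP : ℂ) = ∑ k, ((∑ j, ‖⟪φ j, φ k⟫_ℂ‖ ^ 2 : ℝ) : ℂ) by
      push_cast [hFP]; rw [Finset.sum_comm]]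
    calc ∑ i, ∑ k, ∑ j, conj (φ j i) * φ j k * v (i, k)
        = ∑ i, ∑ j, ∑ k, conj (φ j i) * φ j k * v (i, k) :=
          Finset.sum_congr rfl fun i _ => Finset.sum_comm
      _ = ∑ j, ∑ i, ∑ k, conj (φ j i) * φ j k * v (i, k) := Finset.sum_comm
      _ = ∑ k, ((∑ j, ‖⟪φ j, φ k⟫_ℂ‖ ^ 2 : ℝ) : ℂ) := by
          refine Finset.sum_congr rfl fun k _ => ?_
          rw [aux1 N s φ (φ k)]
  have hvn : ‖v‖ ^ 2 = FP := by
    have := inner_self_eq_norm_sq (𝕜 := ℂ) v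
    rw [hvv] at this
    simpa using this.symm
  have hNpos : (0:ℝ) < N := by exact_mod_cast hN
  have hcs : (s : ℝ)^2 ≤ N * FP := by
    have h1 : ‖⟪w, v⟫_ℂ‖ ≤ ‖w‖ * ‖v‖ := norm_inner_le_norm w v
    have h2 : ‖⟪w, v⟫_ℂ‖ = s := by rw [hwv]; simp
    nlinarith [norm_nonneg w, norm_nonneg v, hwn, hvn]
  refine ⟨by rw [div_le_iff₀ hNpos]; nlinarith, ?_, ?_⟩
  · intro heq
    have hwne : w ≠ 0 := by
      intro h
      have h0 : w (⟨0,hN⟩, ⟨0,hN⟩) = 0 := by rw [h]; rfl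
      simp [hw] at h0
    have hvne : v ≠ 0 := by
      intro h
      rw [h, inner_zero_right] at hwv
      exact (Nat.cast_ne_zero (R := ℂ)).mpr hspos.ne' hwv.symm
    have hnn : ‖⟪w, v⟫_ℂ‖ = ‖w‖ * ‖v‖ := by
      rw [hwv]
      have h3 : ((s:ℝ))^2 = (‖w‖ * ‖v‖)^2 := by
        rw [mul_pow, hwn, hvn, heq]; field_simp
      calc ‖((s:ℕ):ℂ)‖ = (s:ℝ) := by simp
        _ = Real.sqrt ((s:ℝ)^2) := (Real.sqrt_sq (by positivity)).symm
        _ = Real.sqrt ((‖w‖*‖v‖)^2) := by rw [h3]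
        _ = ‖w‖*‖v‖ := Real.sqrt_sq (by positivity)
    obtain ⟨r, hr0, hrv⟩ := (norm_inner_eq_norm_iff hwne hvne).mp hnn
    have hNC : (N:ℂ) ≠ 0 := Nat.cast_ne_zero.mpr hN.ne'
    have hr : r = (s:ℂ)/N := by
      have h4 : ⟪w, r • w⟫_ℂ = (s:ℂ) := by rw [← hrv]; exact hwv
      rw [inner_smul_right, hww] at h4
      field_simp
      linear_combination h4
    have hve : ∀ i k : Fin N,
        (∑ j, φ j i * conj (φ j k)) = ((s:ℂ)/N) * (if i = k then 1 else 0) := by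
      intro i k
      have h := congrArg (fun x => x (i, k)) hrv
      simpa [hv, hw, hr, PiLp.smul_apply, smul_eq_mul, PiLp.toLp_apply] using h
    intro f
    have hre : ((∑ j, ‖⟪φ j, f⟫_ℂ‖^2 : ℝ) : ℂ) = (((s:ℝ)/N) * (‖f‖^2) : ℝ) := by
      rw [aux1]
      calc ∑ i, ∑ k, conj (f i) * f k * (∑ j, φ j i * conj (φ j k))
          = ∑ i, ∑ k, conj (f i) * f k * (((s:ℂ)/N) * (if i = k then 1 else 0)) := by
            simp only [hve]
        _ = ((s:ℂ)/N) * ∑ i, conj (f i) * f i := by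
            rw [Finset.mul_sum]
            refine Finset.sum_congr rfl fun i _ => ?_
            simp [mul_ite, Finset.sum_ite_eq, mul_comm, mul_assoc]
        _ = (((s:ℝ)/N) * (‖f‖^2) : ℝ) := by
            have h5 : ∑ i, conj (f i) * f i = ⟪f, f⟫_ℂ := by
              rw [PiLp.inner_apply]; simp only [RCLike.inner_apply, mul_comm]
            rw [h5, inner_self_eq_norm_sq_to_K]
            push_cast
            ring_nf
            rfl
    exact_mod_cast hre
  · intro htight
    calc FP = ∑ k, ∑ j, ‖⟪φ j, φ k⟫_ℂ‖^2 := by rw [hFP]; exact Finset.sum_comm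
      _ = ∑ _k : Fin s, ((s:ℝ)/N) := by
          refine Finset.sum_congr rfl fun k _ => ?_
          rw [htight (φ k), hφnorm k]; norm_num
      _ = (s:ℝ)^2/N := by
          rw [Finset.sum_const, Finset.card_univ, Fintype.card_fin]
          rw [nsmul_eq_mul]; ring
end

section
/- Let W be an r-dimensional subspace of ℂ^N with r < N. Consider the restricted frame potential FP|_W as a function on the s-fold product of the unit sphere of W, FP(φ_1, …, φ_s) = Σ_{j,k} |⟨φ_j, φ_k⟩|² for unit vectors φ_j ∈ W. Every local minimizer of FP|_W on this product is a global minimizer. -/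
open scoped InnerProductSpace ComplexConjugate
open Filter Topology

namespace RFPaux
variable {V : Type*} [NormedAddCommGroup V] [InnerProductSpace ℂ V]

variable {V : Type*} [NormedAddCommGroup V] [InnerProductSpace ℂ V]

noncomputable def pvec (φ u : V) (t : ℝ) : V :=
  (((Real.sqrt (1 + t ^ 2))⁻¹ : ℝ) : ℂ) • (φ + (t : ℂ) • u)

lemma sqrt_pos' (t : ℝ) : 0 < Real.sqrt (1 + t ^ 2) :=
  Real.sqrt_pos.mpr (by positivity)

lemma cnorm_add_sq (α β : ℂ) (t : ℝ) :
    ‖α + (t:ℂ) * β‖ ^ 2 = ‖α‖ ^ 2 + 2 * t * (conj α * β).re + t ^ 2 * ‖β‖ ^ 2 := by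
  have h : ∀ z : ℂ, ‖z‖ ^ 2 = z.re * z.re + z.im * z.im := by
    intro z
    rw [Complex.sq_norm, Complex.normSq_apply]
  simp only [h, Complex.add_re, Complex.add_im, Complex.mul_re, Complex.mul_im,
    Complex.ofReal_re, Complex.ofReal_im, Complex.conj_re, Complex.conj_im]
  ring

lemma cnorm_smul_sq (c : ℝ) (z : ℂ) : ‖(c:ℂ) * z‖ ^ 2 = c ^ 2 * ‖z‖ ^ 2 := by
  rw [norm_mul, Complex.norm_real, mul_pow, Real.norm_eq_abs, sq_abs]

lemma pvec_inner (φ u y : V) (t : ℝ) :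
    ⟪pvec φ u t, y⟫_ℂ =
      (((Real.sqrt (1 + t ^ 2))⁻¹ : ℝ) : ℂ) * (⟪φ, y⟫_ℂ + (t : ℂ) * ⟪u, y⟫_ℂ) := by
  rw [pvec, inner_smul_left, inner_add_left, inner_smul_left]
  simp [Complex.conj_ofReal]

lemma pvec_inner_sq (φ u y : V) (t : ℝ) :
    ‖⟪pvec φ u t, y⟫_ℂ‖ ^ 2 * (1 + t ^ 2) =
      ‖⟪φ, y⟫_ℂ‖ ^ 2 + 2 * t * (conj ⟪φ, y⟫_ℂ * ⟪u, y⟫_ℂ).re + t ^ 2 * ‖⟪u, y⟫_ℂ‖ ^ 2 := by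
  have hc : ((Real.sqrt (1 + t ^ 2))⁻¹ : ℝ) ^ 2 * (1 + t ^ 2) = 1 := by
    rw [inv_pow, Real.sq_sqrt (by positivity : (0:ℝ) ≤ 1 + t ^ 2)]
    exact inv_mul_cancel₀ (by positivity)
  rw [pvec_inner, cnorm_smul_sq, cnorm_add_sq]
  linear_combination (‖⟪φ, y⟫_ℂ‖ ^ 2 + 2 * t * (conj ⟪φ, y⟫_ℂ * ⟪u, y⟫_ℂ).re
    + t ^ 2 * ‖⟪u, y⟫_ℂ‖ ^ 2) * hc


lemma pvec_norm {φ u : V} (hφ : ‖φ‖ = 1) (hu : ‖u‖ = 1)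
    (h : ⟪φ, u⟫_ℂ = 0) (t : ℝ) : ‖pvec φ u t‖ = 1 := by
  have hsq : ‖φ + (t : ℂ) • u‖ ^ 2 = 1 + t ^ 2 := by
    rw [norm_add_sq (𝕜 := ℂ)]
    rw [inner_smul_right, h, mul_zero]
    simp only [norm_smul, hφ, hu, Complex.norm_real, Real.norm_eq_abs, map_zero, mul_zero,
      mul_one, one_pow, mul_pow, sq_abs]
    ring
  have hn : ‖φ + (t : ℂ) • u‖ = Real.sqrt (1 + t ^ 2) := by
    rw [← hsq]
    exact (Real.sqrt_sq (norm_nonneg _)).symm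
  rw [pvec, norm_smul, hn, Complex.norm_real, Real.norm_eq_abs,
    abs_of_nonneg (inv_nonneg.mpr (Real.sqrt_nonneg _))]
  exact inv_mul_cancel₀ (sqrt_pos' t).ne'

lemma pvec_zero (φ u : V) : pvec φ u 0 = φ := by
  simp [pvec]

lemma pvec_tendsto (φ u : V) : Tendsto (pvec φ u) (𝓝 0) (𝓝 φ) := by
  have c1 : Continuous fun t : ℝ => (((Real.sqrt (1 + t ^ 2))⁻¹ : ℝ) : ℂ) := by
    refine Complex.continuous_ofReal.comp (Continuous.inv₀ ?_ ?_)
    · exact Real.continuous_sqrt.comp (by continuity)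
    · exact fun t => (sqrt_pos' t).ne'
  have c2 : Continuous fun t : ℝ => φ + (t : ℂ) • u := by
    refine continuous_const.add (Continuous.smul Complex.continuous_ofReal continuous_const)
  exact ((c1.smul c2).tendsto' 0 φ (by simpa using pvec_zero φ u))

omit [NormedAddCommGroup V] [InnerProductSpace ℂ V] in
lemma extract {B C : ℝ} (h : ∀ᶠ t in nhds (0 : ℝ), 0 ≤ 2 * t * B + t ^ 2 * C) :
    B = 0 ∧ 0 ≤ C := by
  rw [Metric.eventually_nhds_iff] at h
  obtain ⟨δ, hδ, hp⟩ := h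
  have hp' : ∀ t : ℝ, |t| < δ → 0 ≤ 2 * t * B + t ^ 2 * C := by
    intro t ht
    exact hp (by simpa [Real.dist_eq] using ht)
  have h1 := hp' (δ / 2) (by rw [abs_of_pos (by linarith)]; linarith)
  have h2 := hp' (-(δ / 2)) (by rw [abs_of_neg (by linarith)]; linarith)
  have hC : 0 ≤ C := by nlinarith [mul_pos hδ hδ]
  refine ⟨?_, hC⟩
  by_contra hB
  have habs : 0 < |B| := abs_pos.mpr hB
  set t0 := min (δ / 2) (|B| / (C + 1)) with ht0def
  have ht0pos : 0 < t0 := lt_min (by linarith) (by positivity)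
  have ht0δ : t0 < δ := lt_of_le_of_lt (min_le_left _ _) (by linarith)
  have ht0B : t0 * (C + 1) ≤ |B| := by
    have := min_le_right (δ / 2) (|B| / (C + 1))
    rw [← ht0def] at this
    calc t0 * (C + 1) ≤ (|B| / (C + 1)) * (C + 1) := by nlinarith
      _ = |B| := by field_simp
  rcases lt_or_gt_of_ne hB with hBneg | hBpos
  · have := hp' t0 (by rw [abs_of_pos ht0pos]; exact ht0δ)
    have hBabs : |B| = -B := abs_of_neg hBneg
    nlinarith
  · have := hp' (-t0) (by rw [abs_of_neg (by linarith)]; simpa using ht0δ)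
    have hBabs : |B| = B := abs_of_pos hBpos
    nlinarith [mul_pos ht0pos ht0pos, mul_pos ht0pos hBpos]



variable {V : Type*} [NormedAddCommGroup V] [InnerProductSpace ℂ V]

noncomputable def fpot {s : ℕ} (v : Fin s → V) : ℝ := ∑ j, ∑ k, ‖⟪v j, v k⟫_ℂ‖ ^ 2

lemma mul_conj'' (z : ℂ) : z * conj z = ((‖z‖ : ℝ) : ℂ) ^ 2 := by
  rw [Complex.mul_conj]
  norm_cast
  rw [Complex.normSq_eq_norm_sq]

lemma conj_mul'' (z : ℂ) : conj z * z = ((‖z‖ : ℝ) : ℂ) ^ 2 := by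
  rw [mul_comm, mul_conj'']

lemma fpot_nonneg {s : ℕ} (v : Fin s → V) : 0 ≤ fpot v :=
  Finset.sum_nonneg fun j _ => Finset.sum_nonneg fun k _ => by positivity

lemma fpot_ge_card {s : ℕ} (v : Fin s → V) (hv : ∀ j, ‖v j‖ = 1) : (s : ℝ) ≤ fpot v := by
  have h1 : ∀ j : Fin s, (1 : ℝ) ≤ ∑ k, ‖⟪v j, v k⟫_ℂ‖ ^ 2 := by
    intro j
    have hd : ‖⟪v j, v j⟫_ℂ‖ ^ 2 = 1 := by
      rw [inner_self_eq_norm_sq_to_K (𝕜 := ℂ), hv j]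
      norm_num
    calc (1 : ℝ) = ‖⟪v j, v j⟫_ℂ‖ ^ 2 := hd.symm
      _ ≤ ∑ k, ‖⟪v j, v k⟫_ℂ‖ ^ 2 :=
          Finset.single_le_sum (f := fun k => ‖⟪v j, v k⟫_ℂ‖ ^ 2)
            (fun k _ => by positivity) (Finset.mem_univ j)
  calc (s : ℝ) = ∑ _j : Fin s, (1 : ℝ) := by simp
    _ ≤ fpot v := Finset.sum_le_sum fun j _ => h1 j

lemma parseval {n : ℕ} (b : OrthonormalBasis (Fin n) ℂ V) (x : V) (hx : ‖x‖ = 1) :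
    ∑ i, ‖⟪x, b i⟫_ℂ‖ ^ 2 = 1 := by
  have h := b.sum_inner_mul_inner x x
  have h2 : ∀ i : Fin n, ⟪x, b i⟫_ℂ * ⟪b i, x⟫_ℂ = ((‖⟪x, b i⟫_ℂ‖ : ℝ) : ℂ) ^ 2 := by
    intro i
    rw [show ⟪b i, x⟫_ℂ = conj ⟪x, b i⟫_ℂ from (inner_conj_symm _ _).symm, mul_conj'']
  rw [Finset.sum_congr rfl fun i _ => h2 i, inner_self_eq_norm_sq_to_K (𝕜 := ℂ), hx] at h
  have h3 : ((∑ i, ‖⟪x, b i⟫_ℂ‖ ^ 2 : ℝ) : ℂ) = ((1 : ℝ) : ℂ) := by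
    push_cast
    simpa using h
  exact_mod_cast h3

lemma fpot_ge_welch {s : ℕ} [FiniteDimensional ℂ V] (w : Fin s → V) (hw : ∀ j, ‖w j‖ = 1) :
    (s : ℝ) ^ 2 / (Module.finrank ℂ V : ℝ) ≤ fpot w := by
  set n := Module.finrank ℂ V with hn
  rcases Nat.eq_zero_or_pos n with h0 | hpos
  · rw [h0]
    simpa using fpot_nonneg w
  set b := stdOrthonormalBasis ℂ V with hb
  set M : Fin n → Fin n → ℂ := fun i i' => ∑ k, ⟪b i, w k⟫_ℂ * ⟪w k, b i'⟫_ℂ with hM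
  set d : Fin n → ℝ := fun i => ∑ k, ‖⟪w k, b i⟫_ℂ‖ ^ 2 with hd
  have hMd : ∀ i, M i i = ((d i : ℝ) : ℂ) := by
    intro i
    rw [hM, hd]
    push_cast
    refine Finset.sum_congr rfl fun k _ => ?_
    rw [show ⟪b i, w k⟫_ℂ = conj ⟪w k, b i⟫_ℂ from (inner_conj_symm _ _).symm, conj_mul'']
  have hMconj : ∀ i i', M i' i = conj (M i i') := by
    intro i i'
    rw [hM, map_sum]
    refine Finset.sum_congr rfl fun k _ => ?_
    rw [map_mul, inner_conj_symm, inner_conj_symm]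
    ring
  have hkey : (fpot w : ℂ) = ∑ i, ∑ i', ((‖M i i'‖ : ℝ) : ℂ) ^ 2 := by
    have e1 : (fpot w : ℂ) = ∑ j, ∑ k, ⟪w j, w k⟫_ℂ * ⟪w k, w j⟫_ℂ := by
      rw [fpot]
      push_cast
      refine Finset.sum_congr rfl fun j _ => Finset.sum_congr rfl fun k _ => ?_
      rw [show ⟪w k, w j⟫_ℂ = conj ⟪w j, w k⟫_ℂ from (inner_conj_symm _ _).symm, mul_conj'']
    have e2 : ∀ j k : Fin s, ⟪w j, w k⟫_ℂ * ⟪w k, w j⟫_ℂ =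
        ∑ i, ∑ i', (⟪w j, b i⟫_ℂ * ⟪b i, w k⟫_ℂ) * (⟪w k, b i'⟫_ℂ * ⟪b i', w j⟫_ℂ) := by
      intro j k
      rw [← b.sum_inner_mul_inner (w j) (w k), ← b.sum_inner_mul_inner (w k) (w j),
        Finset.sum_mul_sum]
    have e3 : (∑ j, ∑ k, ⟪w j, w k⟫_ℂ * ⟪w k, w j⟫_ℂ)
        = ∑ i, ∑ i', M i i' * M i' i := by
      rw [Finset.sum_congr rfl fun j _ => Finset.sum_congr rfl fun k (_ : k ∈ Finset.univ) => e2 j k]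
      calc ∑ j, ∑ k, ∑ i, ∑ i', (⟪w j, b i⟫_ℂ * ⟪b i, w k⟫_ℂ) * (⟪w k, b i'⟫_ℂ * ⟪b i', w j⟫_ℂ)
          = ∑ j, ∑ i, ∑ k, ∑ i', (⟪w j, b i⟫_ℂ * ⟪b i, w k⟫_ℂ) * (⟪w k, b i'⟫_ℂ * ⟪b i', w j⟫_ℂ) :=
            Finset.sum_congr rfl fun j _ => Finset.sum_comm
        _ = ∑ i, ∑ j, ∑ k, ∑ i', (⟪w j, b i⟫_ℂ * ⟪b i, w k⟫_ℂ) * (⟪w k, b i'⟫_ℂ * ⟪b i', w j⟫_ℂ) :=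
            Finset.sum_comm
        _ = ∑ i, ∑ j, ∑ i', ∑ k, (⟪w j, b i⟫_ℂ * ⟪b i, w k⟫_ℂ) * (⟪w k, b i'⟫_ℂ * ⟪b i', w j⟫_ℂ) :=
            Finset.sum_congr rfl fun i _ => Finset.sum_congr rfl fun j _ => Finset.sum_comm
        _ = ∑ i, ∑ i', ∑ j, ∑ k, (⟪w j, b i⟫_ℂ * ⟪b i, w k⟫_ℂ) * (⟪w k, b i'⟫_ℂ * ⟪b i', w j⟫_ℂ) :=
            Finset.sum_congr rfl fun i _ => Finset.sum_comm
        _ = ∑ i, ∑ i', M i i' * M i' i := by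
            refine Finset.sum_congr rfl fun i _ => Finset.sum_congr rfl fun i' _ => ?_
            rw [hM]
            rw [Finset.sum_mul_sum]
            rw [Finset.sum_comm]
            refine Finset.sum_congr rfl fun j _ => Finset.sum_congr rfl fun k _ => ?_
            ring
    rw [e1, e3]
    refine Finset.sum_congr rfl fun i _ => Finset.sum_congr rfl fun i' _ => ?_
    rw [hMconj i i', mul_conj'']
  have hreal : fpot w = ∑ i, ∑ i', ‖M i i'‖ ^ 2 := by
    have h4 : ((fpot w : ℝ) : ℂ) = ((∑ i, ∑ i', ‖M i i'‖ ^ 2 : ℝ) : ℂ) := by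
      rw [hkey]
      push_cast
      rfl
    exact_mod_cast h4
  have hdiag : ∑ i, (d i) ^ 2 ≤ fpot w := by
    rw [hreal]
    refine Finset.sum_le_sum fun i _ => ?_
    have h5 : ‖M i i‖ ^ 2 = (d i) ^ 2 := by
      rw [hMd i, Complex.norm_real, Real.norm_eq_abs, sq_abs]
    rw [← h5]
    exact Finset.single_le_sum (f := fun i' => ‖M i i'‖ ^ 2)
      (fun i' _ => by positivity) (Finset.mem_univ i)
  have htrace : ∑ i, d i = (s : ℝ) := by
    rw [hd, Finset.sum_comm,
      Finset.sum_congr rfl fun k (_ : k ∈ Finset.univ) => parseval b (w k) (hw k)]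
    simp
  have hcs : (s : ℝ) ^ 2 ≤ (n : ℝ) * ∑ i, (d i) ^ 2 := by
    have h := Finset.sum_mul_sq_le_sq_mul_sq Finset.univ (fun _ : Fin n => (1 : ℝ)) d
    simp only [one_pow, one_mul, Finset.sum_const, Finset.card_univ, Fintype.card_fin,
      nsmul_eq_mul, mul_one] at h
    calc (s : ℝ) ^ 2 = (∑ i, d i) ^ 2 := by rw [htrace]
      _ ≤ (n : ℝ) * ∑ i, (d i) ^ 2 := h
  rw [div_le_iff₀ (by exact_mod_cast hpos)]
  have hn0 : (0 : ℝ) ≤ (n : ℝ) := Nat.cast_nonneg n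
  nlinarith [hcs, hdiag]


omit [NormedAddCommGroup V] [InnerProductSpace ℂ V] in
/-- generic double-sum difference when modifying on a finset `t` -/
lemma sum2_diff {s : ℕ} (F : V → V → ℝ) (hF : ∀ a b, F a b = F b a)
    (v w : Fin s → V) (t : Finset (Fin s)) (hw : ∀ p ∉ t, w p = v p) :
    (∑ p, ∑ q, F (w p) (w q)) =
      (∑ p, ∑ q, F (v p) (v q))
      + ((∑ p ∈ t, ∑ q ∈ t, F (w p) (w q)) - ∑ p ∈ t, ∑ q ∈ t, F (v p) (v q))
      + 2 * ((∑ p ∈ t, ∑ q ∈ tᶜ, F (w p) (v q)) - ∑ p ∈ t, ∑ q ∈ tᶜ, F (v p) (v q)) := by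
  have key : ∀ u : Fin s → V, (∀ p ∉ t, u p = v p) →
      (∑ p, ∑ q, F (u p) (u q)) =
        (∑ p ∈ t, ∑ q ∈ t, F (u p) (u q)) + 2 * (∑ p ∈ t, ∑ q ∈ tᶜ, F (u p) (v q))
          + ∑ p ∈ tᶜ, ∑ q ∈ tᶜ, F (v p) (v q) := by
    intro u hu
    have hcompl : ∀ p ∈ tᶜ, u p = v p := fun p hp => hu p (Finset.mem_compl.mp hp)
    have hsplit : ∀ p, (∑ q, F (u p) (u q)) =
        (∑ q ∈ t, F (u p) (u q)) + ∑ q ∈ tᶜ, F (u p) (v q) := by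
      intro p
      rw [← Finset.sum_add_sum_compl t (fun q => F (u p) (u q))]
      congr 1
      exact Finset.sum_congr rfl fun q hq => by rw [hcompl q hq]
    calc (∑ p, ∑ q, F (u p) (u q))
        = (∑ p ∈ t, ∑ q, F (u p) (u q)) + ∑ p ∈ tᶜ, ∑ q, F (u p) (u q) :=
          (Finset.sum_add_sum_compl t _).symm
      _ = ((∑ p ∈ t, ∑ q ∈ t, F (u p) (u q)) + ∑ p ∈ t, ∑ q ∈ tᶜ, F (u p) (v q))
          + ((∑ p ∈ tᶜ, ∑ q ∈ t, F (v p) (u q)) + ∑ p ∈ tᶜ, ∑ q ∈ tᶜ, F (v p) (v q)) := by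
          rw [← Finset.sum_add_distrib, ← Finset.sum_add_distrib]
          congr 1
          · exact Finset.sum_congr rfl fun p _ => hsplit p
          · refine Finset.sum_congr rfl fun p hp => ?_
            rw [hcompl p hp] at *
            rw [← Finset.sum_add_sum_compl t (fun q => F (v p) (u q))]
            congr 1
            exact Finset.sum_congr rfl fun q hq => by rw [hcompl q hq]
      _ = (∑ p ∈ t, ∑ q ∈ t, F (u p) (u q)) + 2 * (∑ p ∈ t, ∑ q ∈ tᶜ, F (u p) (v q))
          + ∑ p ∈ tᶜ, ∑ q ∈ tᶜ, F (v p) (v q) := by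
          have hswap : (∑ p ∈ tᶜ, ∑ q ∈ t, F (v p) (u q))
              = ∑ p ∈ t, ∑ q ∈ tᶜ, F (u p) (v q) := by
            rw [Finset.sum_comm]
            exact Finset.sum_congr rfl fun p _ => Finset.sum_congr rfl fun q _ => hF _ _
          rw [hswap]; ring
  have h1 := key w hw
  have h2 := key v (fun _ _ => rfl)
  rw [h1, h2]; ring



set_option maxHeartbeats 1600000 in
theorem fpot_local_min_global [FiniteDimensional ℂ V] {s : ℕ}
    (v : Fin s → V) (hv : ∀ j, ‖v j‖ = 1)
    (hbridge : ∀ Φ : ℝ → Fin s → V, (∀ t j, ‖Φ t j‖ = 1) →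
      (∀ j, Tendsto (fun t => Φ t j) (𝓝 0) (𝓝 (v j))) →
      ∀ᶠ t in 𝓝 (0 : ℝ), fpot v ≤ fpot (Φ t))
    (w : Fin s → V) (hw : ∀ j, ‖w j‖ = 1) :
    fpot v ≤ fpot w := by
  rcases Nat.eq_zero_or_pos s with hs0 | hs0
  · subst hs0
    simp [fpot]
  have innerself : ∀ j, ⟪v j, v j⟫_ℂ = 1 := by
    intro j
    rw [inner_self_eq_norm_sq_to_K (𝕜 := ℂ), hv j]
    norm_num
  have Fsymm : ∀ a b : V, ‖⟪a, b⟫_ℂ‖ ^ 2 = ‖⟪b, a⟫_ℂ‖ ^ 2 := by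
    intro a b
    rw [← inner_conj_symm a b, RCLike.norm_conj]
  set q : Fin s → ℝ := fun j => ∑ k ∈ ({j}ᶜ : Finset (Fin s)), ‖⟪v j, v k⟫_ℂ‖ ^ 2 with hqdef
  have hqnn : ∀ j, 0 ≤ q j := fun j => Finset.sum_nonneg fun k _ => by positivity
  have fpot_v_eq : fpot v = ∑ j, (1 + q j) := by
    rw [fpot]
    refine Finset.sum_congr rfl fun j _ => ?_
    rw [← Finset.sum_add_sum_compl {j} (fun k => ‖⟪v j, v k⟫_ℂ‖ ^ 2), Finset.sum_singleton,
      innerself j]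
    simp [hqdef]
  -- first order + second order single-vector conditions
  have lm1 : ∀ (j : Fin s) (u : V), ‖u‖ = 1 → ⟪v j, u⟫_ℂ = 0 →
      (∑ k ∈ ({j}ᶜ : Finset (Fin s)), (conj ⟪v j, v k⟫_ℂ * ⟪u, v k⟫_ℂ)).re = 0 ∧
        q j ≤ ∑ k ∈ ({j}ᶜ : Finset (Fin s)), ‖⟪u, v k⟫_ℂ‖ ^ 2 := by
    intro j u hu hou
    set B : ℝ := (∑ k ∈ ({j}ᶜ : Finset (Fin s)), (conj ⟪v j, v k⟫_ℂ * ⟪u, v k⟫_ℂ)).re with hBdef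
    set Qu : ℝ := ∑ k ∈ ({j}ᶜ : Finset (Fin s)), ‖⟪u, v k⟫_ℂ‖ ^ 2 with hQudef
    set Φ : ℝ → Fin s → V := fun t => Function.update v j (pvec (v j) u t) with hΦdef
    have hΦj : ∀ t, Φ t j = pvec (v j) u t := by
      intro t; simp [hΦdef]
    have hΦp : ∀ t p, p ≠ j → Φ t p = v p := by
      intro t p hp; simp [hΦdef, Function.update_of_ne hp]
    have hΦnorm : ∀ t p, ‖Φ t p‖ = 1 := by
      intro t p
      by_cases hp : p = j
      · subst hp; rw [hΦj]; exact pvec_norm (hv p) hu hou t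
      · rw [hΦp t p hp]; exact hv p
    have hΦtend : ∀ p, Tendsto (fun t => Φ t p) (𝓝 0) (𝓝 (v p)) := by
      intro p
      by_cases hp : p = j
      · subst hp
        simp only [hΦj]
        exact pvec_tendsto (v p) u
      · simp only [hΦp _ _ hp]
        exact tendsto_const_nhds
    have hev := hbridge Φ hΦnorm hΦtend
    have hdiff : ∀ t : ℝ, (fpot (Φ t) - fpot v) * (1 + t ^ 2) =
        2 * (2 * t * B + t ^ 2 * (Qu - q j)) := by
      intro t
      have hupd : ∀ p, p ∉ ({j} : Finset (Fin s)) → Φ t p = v p := by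
        intro p hp
        exact hΦp t p (by simpa using hp)
      have hsplit := sum2_diff (fun a b => ‖⟪a, b⟫_ℂ‖ ^ 2) Fsymm v (Φ t) {j} hupd
      have hb1 : ∑ p ∈ ({j} : Finset (Fin s)), ∑ k ∈ ({j} : Finset (Fin s)),
          ‖⟪Φ t p, Φ t k⟫_ℂ‖ ^ 2 = 1 := by
        rw [Finset.sum_singleton, Finset.sum_singleton, hΦj,
          inner_self_eq_norm_sq_to_K (𝕜 := ℂ), pvec_norm (hv j) hu hou]
        simp
      have hb1' : ∑ p ∈ ({j} : Finset (Fin s)), ∑ k ∈ ({j} : Finset (Fin s)),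
          ‖⟪v p, v k⟫_ℂ‖ ^ 2 = 1 := by
        rw [Finset.sum_singleton, Finset.sum_singleton, innerself j]
        simp
      have hb3 : ∑ p ∈ ({j} : Finset (Fin s)), ∑ k ∈ ({j}ᶜ : Finset (Fin s)),
          ‖⟪v p, v k⟫_ℂ‖ ^ 2 = q j := by
        rw [Finset.sum_singleton]
      have hb2 : (∑ p ∈ ({j} : Finset (Fin s)), ∑ k ∈ ({j}ᶜ : Finset (Fin s)),
          ‖⟪Φ t p, v k⟫_ℂ‖ ^ 2) * (1 + t ^ 2) = q j + 2 * t * B + t ^ 2 * Qu := by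
        rw [Finset.sum_singleton, hΦj, Finset.sum_mul,
          Finset.sum_congr rfl fun k (_ : k ∈ ({j}ᶜ : Finset (Fin s))) =>
            pvec_inner_sq (v j) u (v k) t]
        have hA : ∑ k ∈ ({j}ᶜ : Finset (Fin s)), ‖⟪v j, v k⟫_ℂ‖ ^ 2 = q j := by
          simp only [hqdef]
        have hB2 : ∑ k ∈ ({j}ᶜ : Finset (Fin s)),
            2 * t * ((conj ⟪v j, v k⟫_ℂ) * ⟪u, v k⟫_ℂ).re = 2 * t * B := by
          rw [hBdef, Complex.re_sum, Finset.mul_sum]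
        have hC2 : ∑ k ∈ ({j}ᶜ : Finset (Fin s)), t ^ 2 * ‖⟪u, v k⟫_ℂ‖ ^ 2 = t ^ 2 * Qu := by
          rw [hQudef, Finset.mul_sum]
        rw [Finset.sum_add_distrib, Finset.sum_add_distrib, hA, hB2, hC2]
      rw [fpot, fpot, hsplit, hb1, hb1', hb3]
      linear_combination 2 * hb2
    have hineq : ∀ᶠ t in 𝓝 (0 : ℝ), 0 ≤ 2 * t * B + t ^ 2 * (Qu - q j) := by
      filter_upwards [hev] with t ht
      have h1p : (0 : ℝ) < 1 + t ^ 2 := by positivity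
      have h2 := hdiff t
      nlinarith [mul_nonneg (sub_nonneg.mpr ht) h1p.le]
    obtain ⟨hB, hC⟩ := extract hineq
    exact ⟨hB, by linarith⟩
  -- complex version of first-order condition
  have eig0 : ∀ (j : Fin s) (u : V), ‖u‖ = 1 → ⟪v j, u⟫_ℂ = 0 →
      ∑ k ∈ ({j}ᶜ : Finset (Fin s)), ⟪v j, v k⟫_ℂ * ⟪v k, u⟫_ℂ = 0 := by
    intro j u hu hou
    set z : ℂ := ∑ k ∈ ({j}ᶜ : Finset (Fin s)), ⟪v j, v k⟫_ℂ * ⟪v k, u⟫_ℂ with hz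
    have e1 : (∑ k ∈ ({j}ᶜ : Finset (Fin s)), (conj ⟪v j, v k⟫_ℂ * ⟪u, v k⟫_ℂ)) = conj z := by
      rw [hz, map_sum]
      refine Finset.sum_congr rfl fun k _ => ?_
      rw [map_mul, inner_conj_symm, inner_conj_symm]
    have h1 := (lm1 j u hu hou).1
    rw [e1, Complex.conj_re] at h1
    have hu2 : ‖Complex.I • u‖ = 1 := by
      rw [norm_smul, Complex.norm_I, one_mul, hu]
    have hou2 : ⟪v j, Complex.I • u⟫_ℂ = 0 := by
      rw [inner_smul_right, hou, mul_zero]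
    have e2 : (∑ k ∈ ({j}ᶜ : Finset (Fin s)), (conj ⟪v j, v k⟫_ℂ * ⟪Complex.I • u, v k⟫_ℂ))
        = -Complex.I * conj z := by
      rw [hz, map_sum, Finset.mul_sum]
      refine Finset.sum_congr rfl fun k _ => ?_
      rw [inner_smul_left, map_mul, inner_conj_symm]
      simp [Complex.conj_I]
      ring
    have h2 := (lm1 j (Complex.I • u) hu2 hou2).1
    rw [e2] at h2
    have h2' : z.im = 0 := by
      simp only [Complex.mul_re, Complex.neg_re, Complex.neg_im, Complex.I_re, Complex.I_im,
        Complex.conj_re, Complex.conj_im] at h2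
      linarith
    exact Complex.ext h1 h2'
  -- each v j is an eigenvector
  have meig : ∀ j : Fin s, (∑ k ∈ ({j}ᶜ : Finset (Fin s)), ⟪v k, v j⟫_ℂ • v k)
      = ((q j : ℝ) : ℂ) • v j := by
    intro j
    set m : V := ∑ k ∈ ({j}ᶜ : Finset (Fin s)), ⟪v k, v j⟫_ℂ • v k with hm
    have hvm : ⟪v j, m⟫_ℂ = ((q j : ℝ) : ℂ) := by
      rw [hm, inner_sum]
      simp only [inner_smul_right]
      simp only [hqdef]
      push_cast
      refine Finset.sum_congr rfl fun k _ => ?_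
      rw [show ⟪v k, v j⟫_ℂ = conj ⟪v j, v k⟫_ℂ from (inner_conj_symm _ _).symm]
      rw [mul_comm, mul_conj'']
    have hmu : ∀ u : V, ‖u‖ = 1 → ⟪v j, u⟫_ℂ = 0 → ⟪m, u⟫_ℂ = 0 := by
      intro u hu hou
      have h := eig0 j u hu hou
      rw [hm, sum_inner]
      simp only [inner_smul_left]
      rw [← h]
      refine Finset.sum_congr rfl fun k _ => ?_
      rw [inner_conj_symm]
    set wv : V := m - ((q j : ℝ) : ℂ) • v j with hwv
    have hwjv : ⟪v j, wv⟫_ℂ = 0 := by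
      rw [hwv, inner_sub_right, inner_smul_right, hvm, innerself j]
      ring
    by_cases hz : wv = 0
    · rw [hwv, sub_eq_zero] at hz
      exact hz
    · exfalso
      have hwnz : ‖wv‖ ≠ 0 := by simpa using hz
      set u : V := ((‖wv‖⁻¹ : ℝ) : ℂ) • wv with hudef
      have hu : ‖u‖ = 1 := by
        rw [hudef, norm_smul, Complex.norm_real, Real.norm_eq_abs,
          abs_of_nonneg (inv_nonneg.mpr (norm_nonneg _))]
        exact inv_mul_cancel₀ hwnz
      have hou : ⟪v j, u⟫_ℂ = 0 := by
        rw [hudef, inner_smul_right, hwjv, mul_zero]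
      have h0 := hmu u hu hou
      rw [hudef, inner_smul_right] at h0
      have hmwv : ⟪m, wv⟫_ℂ = ((‖wv‖ ^ 2 : ℝ) : ℂ) := by
        have hmw : m = wv + ((q j : ℝ) : ℂ) • v j := by rw [hwv]; abel
        rw [hmw, inner_add_left, inner_smul_left, hwjv, mul_zero, add_zero,
          inner_self_eq_norm_sq_to_K (𝕜 := ℂ)]
        norm_cast
      rw [hmwv] at h0
      have : ((‖wv‖⁻¹ : ℝ) : ℂ) ≠ 0 := by
        simp [hwnz]
      have h3 : ((‖wv‖ ^ 2 : ℝ) : ℂ) = 0 := by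
        rcases mul_eq_zero.mp h0 with h | h
        · exact absurd h this
        · exact h
      have : ‖wv‖ = 0 := by
        have := Complex.ofReal_eq_zero.mp h3
        nlinarith [norm_nonneg wv]
      exact hwnz this
  -- eigen identity against arbitrary vectors
  have eig : ∀ (x : V) (j : Fin s),
      ∑ k, ⟪x, v k⟫_ℂ * ⟪v k, v j⟫_ℂ = ((1 + q j : ℝ) : ℂ) * ⟪x, v j⟫_ℂ := by
    intro x j
    rw [← Finset.sum_add_sum_compl {j} (fun k => ⟪x, v k⟫_ℂ * ⟪v k, v j⟫_ℂ),
      Finset.sum_singleton, innerself j]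
    have h2 : ∑ k ∈ ({j}ᶜ : Finset (Fin s)), ⟪x, v k⟫_ℂ * ⟪v k, v j⟫_ℂ
        = ((q j : ℝ) : ℂ) * ⟪x, v j⟫_ℂ := by
      have : ∑ k ∈ ({j}ᶜ : Finset (Fin s)), ⟪x, v k⟫_ℂ * ⟪v k, v j⟫_ℂ
          = ⟪x, ∑ k ∈ ({j}ᶜ : Finset (Fin s)), ⟪v k, v j⟫_ℂ • v k⟫_ℂ := by
        rw [inner_sum]
        refine Finset.sum_congr rfl fun k _ => ?_
        rw [inner_smul_right]
        ring
      rw [this, meig j, inner_smul_right]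
    rw [h2]
    push_cast
    ring
  -- all eigenvalues are equal
  have qconst : ∀ j k : Fin s, q k < q j → False := by
    intro j k hlt
    have hjk : j ≠ k := by rintro rfl; exact lt_irrefl _ hlt
    set g : ℝ := q j - q k with hg
    have hgpos : 0 < g := by simp only [hg]; linarith
    have horth : ⟪v j, v k⟫_ℂ = 0 := by
      have h1 := eig (v j) k
      have h2 := eig (v k) j
      have h3 : ∑ l, ⟪v j, v l⟫_ℂ * ⟪v l, v k⟫_ℂ = ((1 + q j : ℝ) : ℂ) * ⟪v j, v k⟫_ℂ := by
        calc ∑ l, ⟪v j, v l⟫_ℂ * ⟪v l, v k⟫_ℂ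
            = conj (∑ l, ⟪v k, v l⟫_ℂ * ⟪v l, v j⟫_ℂ) := by
              rw [map_sum]
              refine Finset.sum_congr rfl fun l _ => ?_
              rw [map_mul, inner_conj_symm, inner_conj_symm]
              ring
          _ = conj (((1 + q j : ℝ) : ℂ) * ⟪v k, v j⟫_ℂ) := by rw [h2]
          _ = ((1 + q j : ℝ) : ℂ) * ⟪v j, v k⟫_ℂ := by
              rw [map_mul, Complex.conj_ofReal, inner_conj_symm]
      have h4 : ((1 + q k : ℝ) : ℂ) * ⟪v j, v k⟫_ℂ = ((1 + q j : ℝ) : ℂ) * ⟪v j, v k⟫_ℂ := by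
        rw [← h1, h3]
      by_contra hne
      have h5 : ((1 + q k : ℝ) : ℂ) = ((1 + q j : ℝ) : ℂ) := mul_right_cancel₀ hne h4
      have h6 : (1 + q k : ℝ) = 1 + q j := by exact_mod_cast h5
      linarith
    have horth' : ⟪v k, v j⟫_ℂ = 0 := by
      rw [← inner_conj_symm, horth, map_zero]
    -- the cross sum vanishes
    have hS0 : ∑ l ∈ ({j, k} : Finset (Fin s))ᶜ, conj ⟪v j, v l⟫_ℂ * ⟪v k, v l⟫_ℂ = 0 := by
      have htot : ∑ l, ⟪v k, v l⟫_ℂ * ⟪v l, v j⟫_ℂ = 0 := by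
        rw [eig (v k) j, horth', mul_zero]
      have hsplit := Finset.sum_add_sum_compl ({j, k} : Finset (Fin s))
        (fun l => ⟪v k, v l⟫_ℂ * ⟪v l, v j⟫_ℂ)
      rw [htot, Finset.sum_pair hjk, innerself, horth'] at hsplit
      have h7 : ∑ l ∈ ({j, k} : Finset (Fin s))ᶜ, ⟪v k, v l⟫_ℂ * ⟪v l, v j⟫_ℂ = 0 := by
        rw [innerself k] at hsplit
        linear_combination hsplit
      rw [← h7]
      refine Finset.sum_congr rfl fun l _ => ?_
      rw [inner_conj_symm]
      ring
    -- residual sums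
    have hRj : ∑ l ∈ ({j, k} : Finset (Fin s))ᶜ, ‖⟪v j, v l⟫_ℂ‖ ^ 2 = q j := by
      simp only [hqdef]
      refine Finset.sum_subset ?_ ?_
      · intro x hx
        simp only [Finset.mem_compl, Finset.mem_insert, Finset.mem_singleton] at hx
        simp only [Finset.mem_compl, Finset.mem_singleton]
        tauto
      · intro x hx hnx
        simp only [Finset.mem_compl, Finset.mem_singleton] at hx
        simp only [Finset.mem_compl, Finset.mem_insert, Finset.mem_singleton, not_and, not_not,
          not_forall] at hnx
        have hxk : x = k := by tauto
        subst hxk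
        rw [horth]
        simp
    have hRk : ∑ l ∈ ({j, k} : Finset (Fin s))ᶜ, ‖⟪v k, v l⟫_ℂ‖ ^ 2 = q k := by
      simp only [hqdef]
      refine Finset.sum_subset ?_ ?_
      · intro x hx
        simp only [Finset.mem_compl, Finset.mem_insert, Finset.mem_singleton] at hx
        simp only [Finset.mem_compl, Finset.mem_singleton]
        tauto
      · intro x hx hnx
        simp only [Finset.mem_compl, Finset.mem_singleton] at hx
        simp only [Finset.mem_compl, Finset.mem_insert, Finset.mem_singleton, not_and, not_not,
          not_forall] at hnx
        have hxj : x = j := by tauto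
        subst hxj
        rw [horth']
        simp
    -- the two-vector perturbation
    set β : ℝ := 1 / (1 + g) with hβ
    have hvkn : ‖-(v j)‖ = 1 := by rw [norm_neg]; exact hv j
    have hoY : ⟪v k, -(v j)⟫_ℂ = 0 := by rw [inner_neg_right, horth', neg_zero]
    set X : ℝ → V := fun a => pvec (v j) (v k) a with hX
    set Y : ℝ → V := fun a => pvec (v k) (-(v j)) (β * a) with hY
    set Φ : ℝ → Fin s → V := fun a => Function.update (Function.update v j (X a)) k (Y a)
      with hΦdef
    have hΦj : ∀ a, Φ a j = X a := by
      intro a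
      simp only [hΦdef]
      rw [Function.update_of_ne hjk, Function.update_self]
    have hΦk : ∀ a, Φ a k = Y a := by
      intro a
      simp only [hΦdef, Function.update_self]
    have hΦp : ∀ a p, p ≠ j → p ≠ k → Φ a p = v p := by
      intro a p hpj hpk
      simp only [hΦdef]
      rw [Function.update_of_ne hpk, Function.update_of_ne hpj]
    have hXnorm : ∀ a, ‖X a‖ = 1 := fun a => pvec_norm (hv j) (hv k) horth a
    have hYnorm : ∀ a, ‖Y a‖ = 1 := fun a => pvec_norm (hv k) hvkn hoY (β * a)
    have hΦnorm : ∀ a p, ‖Φ a p‖ = 1 := by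
      intro a p
      by_cases hpk : p = k
      · subst hpk; rw [hΦk]; exact hYnorm a
      by_cases hpj : p = j
      · subst hpj; rw [hΦj]; exact hXnorm a
      · rw [hΦp a p hpj hpk]; exact hv p
    have hΦtend : ∀ p, Tendsto (fun a => Φ a p) (𝓝 0) (𝓝 (v p)) := by
      intro p
      by_cases hpk : p = k
      · simp only [hpk, hΦk, hY]
        have hmul : Tendsto (fun a : ℝ => β * a) (𝓝 0) (𝓝 0) := by
          have := (continuous_const.mul continuous_id : Continuous fun a : ℝ => β * a)
          simpa only [mul_zero] using (continuous_mul_left β).tendsto 0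
        have hcomp := (pvec_tendsto (v k) (-(v j))).comp hmul
        exact hcomp
      by_cases hpj : p = j
      · simp only [hpj, hΦj, hX]
        exact pvec_tendsto (v j) (v k)
      · simp only [hΦp _ _ hpj hpk]
        exact tendsto_const_nhds
    have hev := hbridge Φ hΦnorm hΦtend
    -- exact potential difference identity
    have hdiff : ∀ a : ℝ, (fpot (Φ a) - fpot v) * ((1 + a ^ 2) * (1 + (β * a) ^ 2)) =
        2 * ((q k - q j) * (a ^ 2 - (β * a) ^ 2) + (a - β * a) ^ 2) := by
      intro a
      set b : ℝ := β * a with hb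
      have hupd : ∀ p, p ∉ ({j, k} : Finset (Fin s)) → Φ a p = v p := by
        intro p hp
        simp only [Finset.mem_insert, Finset.mem_singleton, not_or] at hp
        exact hΦp a p hp.1 hp.2
      have hsplit := sum2_diff (fun x y => ‖⟪x, y⟫_ℂ‖ ^ 2) Fsymm v (Φ a) {j, k} hupd
      -- diagonal blocks
      have hXX : ‖⟪X a, X a⟫_ℂ‖ ^ 2 = 1 := by
        rw [inner_self_eq_norm_sq_to_K (𝕜 := ℂ), hXnorm a]
        simp
      have hYY : ‖⟪Y a, Y a⟫_ℂ‖ ^ 2 = 1 := by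
        rw [inner_self_eq_norm_sq_to_K (𝕜 := ℂ), hYnorm a]
        simp
      have hb1 : ∑ p ∈ ({j, k} : Finset (Fin s)), ∑ l ∈ ({j, k} : Finset (Fin s)),
          ‖⟪Φ a p, Φ a l⟫_ℂ‖ ^ 2 = 2 + 2 * ‖⟪X a, Y a⟫_ℂ‖ ^ 2 := by
        rw [Finset.sum_pair hjk, Finset.sum_pair hjk, Finset.sum_pair hjk, hΦj, hΦk, hXX, hYY,
          Fsymm (Y a) (X a)]
        ring
      have hb1v : ∑ p ∈ ({j, k} : Finset (Fin s)), ∑ l ∈ ({j, k} : Finset (Fin s)),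
          ‖⟪v p, v l⟫_ℂ‖ ^ 2 = 2 := by
        rw [Finset.sum_pair hjk, Finset.sum_pair hjk, Finset.sum_pair hjk, innerself j,
          innerself k, horth, horth']
        norm_num
      -- cross term between the two moved vectors
      have hXY : ‖⟪X a, Y a⟫_ℂ‖ ^ 2 * ((1 + a ^ 2) * (1 + b ^ 2)) = (a - b) ^ 2 := by
        have hca : ((Real.sqrt (1 + a ^ 2))⁻¹ : ℝ) ^ 2 * (1 + a ^ 2) = 1 := by
          rw [inv_pow, Real.sq_sqrt (by positivity : (0:ℝ) ≤ 1 + a ^ 2)]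
          exact inv_mul_cancel₀ (by positivity)
        have hcb : ((Real.sqrt (1 + b ^ 2))⁻¹ : ℝ) ^ 2 * (1 + b ^ 2) = 1 := by
          rw [inv_pow, Real.sq_sqrt (by positivity : (0:ℝ) ≤ 1 + b ^ 2)]
          exact inv_mul_cancel₀ (by positivity)
        have hYvj : ⟪Y a, v j⟫_ℂ = (((Real.sqrt (1 + b ^ 2))⁻¹ : ℝ) : ℂ) * (-(b : ℂ)) := by
          simp only [hY]
          rw [pvec_inner, horth', inner_neg_left, innerself j, ← hb]
          push_cast
          ring
        have hYj : ⟪v j, Y a⟫_ℂ = (((Real.sqrt (1 + b ^ 2))⁻¹ : ℝ) : ℂ) * (-(b : ℂ)) := by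
          rw [← inner_conj_symm (v j) (Y a), hYvj, map_mul, map_neg, Complex.conj_ofReal,
            Complex.conj_ofReal]
        have hYk : ⟪v k, Y a⟫_ℂ = (((Real.sqrt (1 + b ^ 2))⁻¹ : ℝ) : ℂ) := by
          have hYvk : ⟪Y a, v k⟫_ℂ = (((Real.sqrt (1 + b ^ 2))⁻¹ : ℝ) : ℂ) := by
            simp only [hY]
            rw [pvec_inner, innerself k, inner_neg_left, horth, ← hb]
            push_cast
            ring
          rw [← inner_conj_symm (v k) (Y a), hYvk, Complex.conj_ofReal]
        have hXYinner : ⟪X a, Y a⟫_ℂ =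
            (((Real.sqrt (1 + a ^ 2))⁻¹ : ℝ) : ℂ) * (((Real.sqrt (1 + b ^ 2))⁻¹ : ℝ) : ℂ)
              * ((a : ℂ) - (b : ℂ)) := by
          simp only [hX]
          rw [pvec_inner, hYj, hYk]
          push_cast
          ring
        rw [hXYinner]
        rw [show (((Real.sqrt (1 + a ^ 2))⁻¹ : ℝ) : ℂ) * (((Real.sqrt (1 + b ^ 2))⁻¹ : ℝ) : ℂ)
            * ((a : ℂ) - (b : ℂ)) =
            ((((Real.sqrt (1 + a ^ 2))⁻¹ * ((Real.sqrt (1 + b ^ 2))⁻¹) * (a - b) : ℝ)) : ℂ) by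
          push_cast; ring]
        rw [Complex.norm_real, Real.norm_eq_abs, sq_abs]
        linear_combination (a - b) ^ 2 * ((Real.sqrt (1 + b ^ 2))⁻¹ ^ 2 * (1 + b ^ 2)) * hca
          + (a - b) ^ 2 * hcb
      -- off-diagonal sums for X
      have hb2X : (∑ l ∈ ({j, k} : Finset (Fin s))ᶜ, ‖⟪X a, v l⟫_ℂ‖ ^ 2) * (1 + a ^ 2)
          = q j + a ^ 2 * q k := by
        rw [Finset.sum_mul,
          Finset.sum_congr rfl fun l (_ : l ∈ ({j, k} : Finset (Fin s))ᶜ) =>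
            pvec_inner_sq (v j) (v k) (v l) a]
        rw [Finset.sum_add_distrib, Finset.sum_add_distrib, hRj]
        have hcross : ∑ l ∈ ({j, k} : Finset (Fin s))ᶜ,
            2 * a * ((conj ⟪v j, v l⟫_ℂ) * ⟪v k, v l⟫_ℂ).re = 0 := by
          rw [← Finset.mul_sum, ← Complex.re_sum, hS0]
          simp
        rw [hcross, ← Finset.mul_sum, hRk]
        ring
      -- off-diagonal sums for Y
      have hb2Y : (∑ l ∈ ({j, k} : Finset (Fin s))ᶜ, ‖⟪Y a, v l⟫_ℂ‖ ^ 2) * (1 + b ^ 2)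
          = q k + b ^ 2 * q j := by
        rw [Finset.sum_mul,
          Finset.sum_congr rfl fun l (_ : l ∈ ({j, k} : Finset (Fin s))ᶜ) =>
            pvec_inner_sq (v k) (-(v j)) (v l) b]
        have hcross : ∑ l ∈ ({j, k} : Finset (Fin s))ᶜ,
            2 * b * ((conj ⟪v k, v l⟫_ℂ) * ⟪-(v j), v l⟫_ℂ).re = 0 := by
          rw [← Finset.mul_sum, ← Complex.re_sum]
          have : ∑ l ∈ ({j, k} : Finset (Fin s))ᶜ, (conj ⟪v k, v l⟫_ℂ) * ⟪-(v j), v l⟫_ℂ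
              = - conj (∑ l ∈ ({j, k} : Finset (Fin s))ᶜ, conj ⟪v j, v l⟫_ℂ * ⟪v k, v l⟫_ℂ) := by
            rw [map_sum, ← Finset.sum_neg_distrib]
            refine Finset.sum_congr rfl fun l _ => ?_
            rw [map_mul, Complex.conj_conj, inner_neg_left]
            ring
          rw [this, hS0]
          simp
        have hlast : ∑ l ∈ ({j, k} : Finset (Fin s))ᶜ, b ^ 2 * ‖⟪-(v j), v l⟫_ℂ‖ ^ 2
            = b ^ 2 * q j := by
          rw [← Finset.mul_sum, ← hRj]
          congr 1
          refine Finset.sum_congr rfl fun l _ => ?_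
          rw [inner_neg_left, norm_neg]
        rw [Finset.sum_add_distrib, Finset.sum_add_distrib, hRk, hcross, hlast]
        ring
      have hb2v : ∑ p ∈ ({j, k} : Finset (Fin s)), ∑ l ∈ ({j, k} : Finset (Fin s))ᶜ,
          ‖⟪v p, v l⟫_ℂ‖ ^ 2 = q j + q k := by
        rw [Finset.sum_pair hjk, hRj, hRk]
      have hb2Φ : ∑ p ∈ ({j, k} : Finset (Fin s)), ∑ l ∈ ({j, k} : Finset (Fin s))ᶜ,
          ‖⟪Φ a p, v l⟫_ℂ‖ ^ 2 =
          (∑ l ∈ ({j, k} : Finset (Fin s))ᶜ, ‖⟪X a, v l⟫_ℂ‖ ^ 2)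
          + ∑ l ∈ ({j, k} : Finset (Fin s))ᶜ, ‖⟪Y a, v l⟫_ℂ‖ ^ 2 := by
        rw [Finset.sum_pair hjk, hΦj, hΦk]
      rw [fpot, fpot, hsplit, hb1, hb1v, hb2v, hb2Φ]
      linear_combination 2 * hXY + 2 * (1 + b ^ 2) * hb2X + 2 * (1 + a ^ 2) * hb2Y
    -- contradiction with local minimality
    rw [Metric.eventually_nhds_iff] at hev
    obtain ⟨δ, hδ, hp⟩ := hev
    set a0 : ℝ := δ / 2 with ha0
    have ha0pos : 0 < a0 := by simp only [ha0]; linarith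
    have hle := hp (show dist a0 0 < δ by
      rw [Real.dist_eq, sub_zero, abs_of_pos ha0pos]; simp only [ha0]; linarith)
    have hD : (0 : ℝ) < (1 + a0 ^ 2) * (1 + (β * a0) ^ 2) := by positivity
    have hβval : β * (1 + g) = 1 := by
      rw [hβ]
      field_simp
    have hneg : (q k - q j) * (a0 ^ 2 - (β * a0) ^ 2) + (a0 - β * a0) ^ 2 < 0 := by
      have hqkj : q k - q j = -g := by simp only [hg]; ring
      rw [hqkj]
      have hβlt : β < 1 := by
        rw [hβ]
        rw [div_lt_one (by linarith)]
        linarith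
      have hβpos : 0 < β := by
        rw [hβ]
        positivity
      have key : -g * (1 - β ^ 2) + (1 - β) ^ 2 < 0 := by
        nlinarith [hβval, hgpos, hβpos, hβlt]
      nlinarith [mul_pos ha0pos ha0pos, key]
    have hfinal := hdiff a0
    nlinarith [mul_nonneg (sub_nonneg.mpr hle) hD.le]
  have qeq : ∀ j k : Fin s, q j = q k := by
    intro j k
    by_contra hne
    rcases lt_or_gt_of_ne hne with h | h
    · exact qconst k j h
    · exact qconst j k h
  set j0 : Fin s := ⟨0, hs0⟩ with hj0
  set q0 : ℝ := q j0 with hq0def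
  have fpv : fpot v = s * (1 + q0) := by
    rw [fpot_v_eq]
    calc ∑ j : Fin s, (1 + q j) = ∑ _j : Fin s, (1 + q0) :=
          Finset.sum_congr rfl fun j _ => by rw [qeq j j0, hq0def]
      _ = s * (1 + q0) := by
          rw [Finset.sum_const, Finset.card_univ, Fintype.card_fin, nsmul_eq_mul]
  rcases eq_or_lt_of_le (hqnn j0) with hq0z | hq0pos
  · have hfv : fpot v = (s : ℝ) := by
      rw [fpv, hq0def, ← hq0z]
      ring
    rw [hfv]
    exact fpot_ge_card w hw
  · have hspan : Submodule.span ℂ (Set.range v) = ⊤ := by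
      by_contra hne
      have hbot : (Submodule.span ℂ (Set.range v))ᗮ ≠ ⊥ := by
        intro h
        exact hne (Submodule.orthogonal_eq_bot_iff.mp h)
      obtain ⟨z, hz_mem, hz_ne⟩ := Submodule.exists_mem_ne_zero_of_ne_bot hbot
      have hzv : ∀ p : Fin s, ⟪v p, z⟫_ℂ = 0 := fun p =>
        (Submodule.mem_orthogonal _ z).mp hz_mem (v p)
          (Submodule.subset_span (Set.mem_range_self p))
      have hznz : ‖z‖ ≠ 0 := by simpa using hz_ne
      set u : V := ((‖z‖⁻¹ : ℝ) : ℂ) • z with hudef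
      have hu : ‖u‖ = 1 := by
        rw [hudef, norm_smul, Complex.norm_real, Real.norm_eq_abs,
          abs_of_nonneg (inv_nonneg.mpr (norm_nonneg _))]
        exact inv_mul_cancel₀ hznz
      have hou : ⟪v j0, u⟫_ℂ = 0 := by
        rw [hudef, inner_smul_right, hzv j0, mul_zero]
      have h2 := (lm1 j0 u hu hou).2
      have hz0 : ∑ k ∈ ({j0}ᶜ : Finset (Fin s)), ‖⟪u, v k⟫_ℂ‖ ^ 2 = 0 := by
        refine Finset.sum_eq_zero fun k _ => ?_
        have hvk : ⟪v k, u⟫_ℂ = 0 := by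
          rw [hudef, inner_smul_right, hzv k, mul_zero]
        have huvk : ⟪u, v k⟫_ℂ = 0 := by
          rw [← inner_conj_symm, hvk, map_zero]
        rw [huvk]
        simp
      rw [hz0] at h2
      have hq0eq : q0 = q j0 := hq0def
      linarith
    have eigall : ∀ x y : V,
        ∑ k, ⟪x, v k⟫_ℂ * ⟪v k, y⟫_ℂ = ((1 + q0 : ℝ) : ℂ) * ⟪x, y⟫_ℂ := by
      intro x y
      have hy : y ∈ Submodule.span ℂ (Set.range v) := hspan ▸ Submodule.mem_top
      refine Submodule.span_induction
        (p := fun y' _ => ∑ k, ⟪x, v k⟫_ℂ * ⟪v k, y'⟫_ℂ = ((1 + q0 : ℝ) : ℂ) * ⟪x, y'⟫_ℂ)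
        ?_ ?_ ?_ ?_ hy
      · rintro y' ⟨p, rfl⟩
        rw [eig x p, qeq p j0, hq0def]
      · simp
      · intro y1 y2 hy1 hy2 ih1 ih2
        simp only [inner_add_right, mul_add, Finset.sum_add_distrib, ih1, ih2]
      · intro a y1 hy1 ih
        simp only [inner_smul_right]
        rw [show ∑ k, ⟪x, v k⟫_ℂ * (a * ⟪v k, y1⟫_ℂ)
            = a * ∑ k, ⟪x, v k⟫_ℂ * ⟪v k, y1⟫_ℂ by
          rw [Finset.mul_sum]
          exact Finset.sum_congr rfl fun k _ => by ring]
        rw [ih]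
        ring
    set n := Module.finrank ℂ V with hn
    set e := stdOrthonormalBasis ℂ V with he
    have htr2 : ∀ i : Fin n, ∑ k, ‖⟪v k, e i⟫_ℂ‖ ^ 2 = 1 + q0 := by
      intro i
      have h := eigall (e i) (e i)
      have hei : ⟪e i, e i⟫_ℂ = 1 := by
        rw [inner_self_eq_norm_sq_to_K (𝕜 := ℂ), e.orthonormal.1 i]
        norm_num
      rw [hei, mul_one] at h
      have h2 : ((∑ k, ‖⟪v k, e i⟫_ℂ‖ ^ 2 : ℝ) : ℂ) = ((1 + q0 : ℝ) : ℂ) := by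
        calc ((∑ k, ‖⟪v k, e i⟫_ℂ‖ ^ 2 : ℝ) : ℂ)
            = ∑ k, (((‖⟪v k, e i⟫_ℂ‖ : ℝ) : ℂ)) ^ 2 := by push_cast; rfl
          _ = ∑ k, ⟪e i, v k⟫_ℂ * ⟪v k, e i⟫_ℂ := Finset.sum_congr rfl fun k _ => by
              rw [show ⟪e i, v k⟫_ℂ = conj ⟪v k, e i⟫_ℂ from (inner_conj_symm _ _).symm,
                conj_mul'']
          _ = ((1 + q0 : ℝ) : ℂ) := h
      exact_mod_cast h2
    have htr1 : ∑ i : Fin n, ∑ k, ‖⟪v k, e i⟫_ℂ‖ ^ 2 = (s : ℝ) := by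
      rw [Finset.sum_comm,
        Finset.sum_congr rfl fun k (_ : k ∈ Finset.univ) => parseval e (v k) (hv k)]
      simp
    have hsn : (s : ℝ) = n * (1 + q0) := by
      rw [← htr1, Finset.sum_congr rfl fun i (_ : i ∈ Finset.univ) => htr2 i, Finset.sum_const,
        Finset.card_univ, Fintype.card_fin, nsmul_eq_mul]
    have hnpos : (0 : ℝ) < (n : ℝ) := by
      rcases Nat.eq_zero_or_pos n with h0 | h0
      · exfalso
        rw [h0] at hsn
        simp at hsn
        have hs' : s = 0 := by exact_mod_cast hsn
        omega
      · exact_mod_cast h0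
    have hfv : fpot v = (s : ℝ) ^ 2 / (n : ℝ) := by
      rw [fpv, hsn]
      field_simp
    rw [hfv]
    exact fpot_ge_welch w hw




end RFPaux

open RFPaux Filter Topology in
/-- **Theorem 4 (part 1).** Let `W` be an `r`-dimensional subspace of `ℂ^N` with `r < N`,
and consider the restricted frame potential `FP|_W (φ_1, …, φ_s) = Σ_{j,k} |⟨φ_j, φ_k⟩|²`
as a function on the `s`-fold product of the unit sphere of `W`.  Every local minimizer of
`FP|_W` is a global minimizer. -/
theorem restricted_frame_potential_local_min_global
    (N r s : ℕ) (hr : r < N)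
    (W : Submodule ℂ (EuclideanSpace ℂ (Fin N)))
    (hWdim : Module.finrank ℂ W = r)
    (FP : (Fin s → Metric.sphere (0 : W) 1) → ℝ)
    (hFP : ∀ φ, FP φ = ∑ j, ∑ k,
      ‖⟪((φ j : W) : EuclideanSpace ℂ (Fin N)), ((φ k : W) : EuclideanSpace ℂ (Fin N))⟫_ℂ‖ ^ 2)
    (φ₀ : Fin s → Metric.sphere (0 : W) 1)
    (hmin : IsLocalMin FP φ₀) :
    ∀ ψ : Fin s → Metric.sphere (0 : W) 1, FP φ₀ ≤ FP ψ := by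
  intro ψ
  have hFP' : ∀ φ : Fin s → Metric.sphere (0 : W) 1,
      FP φ = RFPaux.fpot (fun j => (φ j : W)) := by
    intro φ
    rw [hFP, RFPaux.fpot]
    refine Finset.sum_congr rfl fun j _ => Finset.sum_congr rfl fun k _ => ?_
    rw [Submodule.coe_inner]
  set v : Fin s → W := fun j => (φ₀ j : W) with hvdef
  have hv : ∀ j, ‖v j‖ = 1 := fun j => mem_sphere_zero_iff_norm.mp (φ₀ j).2
  have hbridge : ∀ Φ : ℝ → Fin s → W, (∀ t j, ‖Φ t j‖ = 1) →
      (∀ j, Tendsto (fun t => Φ t j) (𝓝 0) (𝓝 (v j))) →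
      ∀ᶠ t in 𝓝 (0 : ℝ), RFPaux.fpot v ≤ RFPaux.fpot (Φ t) := by
    intro Φ hn ht
    set Φ' : ℝ → (Fin s → Metric.sphere (0 : W) 1) := fun t j =>
      ⟨Φ t j, by rw [mem_sphere_zero_iff_norm]; exact hn t j⟩ with hΦ'
    have htend : Tendsto Φ' (𝓝 0) (𝓝 φ₀) := by
      rw [tendsto_pi_nhds]
      intro j
      rw [tendsto_subtype_rng]
      exact ht j
    have hmin' : ∀ᶠ x in 𝓝 φ₀, FP φ₀ ≤ FP x := hmin
    have hev := htend.eventually hmin'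
    filter_upwards [hev] with t ht'
    rw [hFP' φ₀, hFP' (Φ' t)] at ht'
    exact ht'
  have hmain := RFPaux.fpot_local_min_global v hv hbridge (fun j => (ψ j : W))
    (fun j => mem_sphere_zero_iff_norm.mp (ψ j).2)
  rw [hFP' φ₀, hFP' ψ]
  exact hmain
end
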